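/- Let A, B be nonempty closed convex subsets of a uniformly convex Banach space X and T a p-cyclic φ-contraction mapping. If (x,y) ∈ A × B is a coupled best proximity point of T, then T(T(x,y), T(y,x)) = x and T(T(y,x), T(x,y)) = y. -/

import Mathlib

/-!
If `(x, y)` is a coupled best proximity point, the pairs `(x, y)` and `(T x y, T y x)` are at
distance `dist(A, B)`, so the contraction inequality (whose `φ`-terms then cancel) shows that
`T (T x y) (T y x) ∈ A` is again at distance `dist(A, B)` from `T x y ∈ B`, just as `x` is.
In a strictly convex space a point has at most one nearest point in a convex set, hence
`T (T x y) (T y x) = x`; symmetrically `T (T y x) (T x y) = y`.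
-/

/-- `setDist A B = inf {‖a - b‖ : a ∈ A, b ∈ B}`. -/
noncomputable def setDist {X : Type*} [NormedAddCommGroup X] (A B : Set X) : ℝ :=
  sInf {d : ℝ | ∃ a ∈ A, ∃ b ∈ B, d = ‖a - b‖}

section

variable {X : Type*} [NormedAddCommGroup X]

lemma setDist_le_norm_sub {A B : Set X} {a b : X} (ha : a ∈ A) (hb : b ∈ B) :
    setDist A B ≤ ‖a - b‖ :=
  csInf_le ⟨0, fun _ ⟨_, _, _, _, hd⟩ => hd ▸ norm_nonneg _⟩ ⟨a, ha, b, hb, rfl⟩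

lemma setDist_comm (A B : Set X) : setDist A B = setDist B A := by
  have key : ∀ A B : Set X, {d : ℝ | ∃ a ∈ A, ∃ b ∈ B, d = ‖a - b‖} ⊆
      {d : ℝ | ∃ b ∈ B, ∃ a ∈ A, d = ‖b - a‖} := by
    rintro A B _ ⟨a, ha, b, hb, rfl⟩
    exact ⟨b, hb, a, ha, norm_sub_rev a b⟩
  exact congrArg sInf ((key A B).antisymm (key B A))

lemma norm_prod_sub_eq_of_norm_sub_eq {a b c d : X} {r : ℝ}
    (hac : ‖a - c‖ = r) (hbd : ‖b - d‖ = r) : ‖((a, b) : X × X) - (c, d)‖ = r := by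
  rw [Prod.mk_sub_mk, Prod.norm_mk, hac, hbd, max_self]

lemma Convex.eq_of_forall_le_dist [NormedSpace ℝ X] [StrictConvexSpace ℝ X] {A : Set X}
    (hA : Convex ℝ A) {z a b : X} {r : ℝ} (hmin : ∀ c ∈ A, r ≤ dist c z) (ha : a ∈ A)
    (hb : b ∈ A) (haz : dist a z ≤ r) (hbz : dist b z ≤ r) : a = b := by
  by_contra hne
  have hmid : (1 / 2 : ℝ) • a + (1 / 2 : ℝ) • b ∈ Metric.ball z r :=
    combo_mem_ball_of_ne (Metric.mem_closedBall.2 haz) (Metric.mem_closedBall.2 hbz) hne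
      one_half_pos one_half_pos (add_halves 1)
  exact (hmin _ (hA ha hb one_half_pos.le one_half_pos.le (add_halves 1))).not_gt hmid

lemma Convex.eq_of_norm_sub_eq_setDist [NormedSpace ℝ X] [StrictConvexSpace ℝ X]
    {A B : Set X} (hA : Convex ℝ A) {u a b : X} (hu : u ∈ B) (ha : a ∈ A) (hb : b ∈ A)
    (hau : ‖a - u‖ = setDist A B) (hbu : ‖b - u‖ = setDist A B) : a = b :=
  hA.eq_of_forall_le_dist (z := u) (fun c hc => dist_eq_norm c u ▸ setDist_le_norm_sub hc hu)
    ha hb (dist_eq_norm a u ▸ hau.le) (dist_eq_norm b u ▸ hbu.le)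

def IsCyclicPhiContraction (A B : Set X) (T : X → X → X) (φ : ℝ → ℝ) : Prop :=
  ∀ x₁ ∈ A, ∀ y₁ ∈ B, ∀ x₂ ∈ B, ∀ y₂ ∈ A,
    ‖T x₁ y₁ - T x₂ y₂‖ ≤ ‖((x₁, y₁) : X × X) - (x₂, y₂)‖
      - φ ‖((x₁, y₁) : X × X) - (x₂, y₂)‖ + φ (setDist A B)

lemma IsCyclicPhiContraction.norm_sub_eq_setDist {A B : Set X} {T : X → X → X} {φ : ℝ → ℝ}
    (hT : IsCyclicPhiContraction A B T φ)
    (hTB : ∀ x ∈ A, ∀ y ∈ B, T x y ∈ B) (hTA : ∀ x ∈ B, ∀ y ∈ A, T x y ∈ A)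
    {x₁ y₁ x₂ y₂ : X} (hx₁ : x₁ ∈ A) (hy₁ : y₁ ∈ B) (hx₂ : x₂ ∈ B) (hy₂ : y₂ ∈ A)
    (hdist : ‖((x₁, y₁) : X × X) - (x₂, y₂)‖ = setDist A B) :
    ‖T x₂ y₂ - T x₁ y₁‖ = setDist A B := by
  have hle := hT x₁ hx₁ y₁ hy₁ x₂ hx₂ y₂ hy₂
  rw [hdist, norm_sub_rev] at hle
  exact le_antisymm (by linarith) (setDist_le_norm_sub (hTA x₂ hx₂ y₂ hy₂) (hTB x₁ hx₁ y₁ hy₁))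

end

theorem stmt18_general {X : Type*} [NormedAddCommGroup X] [NormedSpace ℝ X] [UniformConvexSpace X]
    (A B : Set X)
    (T : X → X → X) (φ : ℝ → ℝ)
    (hTB : ∀ x ∈ A, ∀ y ∈ B, T x y ∈ B)
    (hTA : ∀ x ∈ B, ∀ y ∈ A, T x y ∈ A)
    (hT : ∀ x₁ ∈ A, ∀ y₁ ∈ B, ∀ x₂ ∈ B, ∀ y₂ ∈ A,
      ‖T x₁ y₁ - T x₂ y₂‖ ≤ ‖((x₁, y₁) : X × X) - (x₂, y₂)‖
        - φ ‖((x₁, y₁) : X × X) - (x₂, y₂)‖ + φ (setDist A B))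
    (hAconv : Convex ℝ A) (hBconv : Convex ℝ B)
    (x' y' : X) (hx' : x' ∈ A) (hy' : y' ∈ B)
    (h1 : ‖x' - T x' y'‖ = setDist A B) (h2 : ‖y' - T y' x'‖ = setDist A B) :
    T (T x' y') (T y' x') = x' ∧ T (T y' x') (T x' y') = y' := by
  have hT' : IsCyclicPhiContraction A B T φ := hT
  have huB : T x' y' ∈ B := hTB x' hx' y' hy'
  have hvA : T y' x' ∈ A := hTA y' hy' x' hx'
  have hTuv : ‖T (T x' y') (T y' x') - T x' y'‖ = setDist A B :=
    hT'.norm_sub_eq_setDist hTB hTA hx' hy' huB hvA (norm_prod_sub_eq_of_norm_sub_eq h1 h2)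
  have hTvu : ‖T (T y' x') (T x' y') - T y' x'‖ = setDist A B := by
    rw [norm_sub_rev]
    exact hT'.norm_sub_eq_setDist hTB hTA hvA huB hy' hx'
      (norm_prod_sub_eq_of_norm_sub_eq (by rwa [norm_sub_rev]) (by rwa [norm_sub_rev]))
  constructor
  · exact hAconv.eq_of_norm_sub_eq_setDist huB (hTA _ huB _ hvA) hx' hTuv h1
  · rw [setDist_comm] at h2 hTvu
    exact hBconv.eq_of_norm_sub_eq_setDist hvA (hTB _ hvA _ huB) hy' hTvu h2

theorem stmt18 {X : Type*} [NormedAddCommGroup X] [NormedSpace ℝ X] [UniformConvexSpace X] [CompleteSpace X]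
    (A B : Set X) (hA : A.Nonempty) (hB : B.Nonempty)
    (T : X → X → X) (φ : ℝ → ℝ)
    (hφmono : StrictMonoOn φ (Set.Ici 0)) (hφpos : ∀ t ≥ (0:ℝ), 0 ≤ φ t)
    (hTB : ∀ x ∈ A, ∀ y ∈ B, T x y ∈ B)
    (hTA : ∀ x ∈ B, ∀ y ∈ A, T x y ∈ A)
    (hT : ∀ x₁ ∈ A, ∀ y₁ ∈ B, ∀ x₂ ∈ B, ∀ y₂ ∈ A,
      ‖T x₁ y₁ - T x₂ y₂‖ ≤ ‖((x₁, y₁) : X × X) - (x₂, y₂)‖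
        - φ ‖((x₁, y₁) : X × X) - (x₂, y₂)‖ + φ (setDist A B))
    (hAcl : IsClosed A) (hBcl : IsClosed B) (hAconv : Convex ℝ A) (hBconv : Convex ℝ B)
    (x' y' : X) (hx' : x' ∈ A) (hy' : y' ∈ B)
    (h1 : ‖x' - T x' y'‖ = setDist A B) (h2 : ‖y' - T y' x'‖ = setDist A B) :
    T (T x' y') (T y' x') = x' ∧ T (T y' x') (T x' y') = y' :=
  stmt18_general A B T φ hTB hTA hT hAconv hBconv x' y' hx' hy' h1 h2
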